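/- arXiv:1009.5186 — 7 statements merged into one kernel-verified Lean document; each statement's English description precedes it below -/
import Mathlib

section
/- Every element of the derived ideal L' = [L,L] of the Lie algebra L generated by two generic traceless 2×2 matrices has the form (xv − yt)·φ(f) + (xu − yv)·φ(g) + [x,y]·φ(h) for some polynomials f, g, h ∈ K[T,U,V]; conversely, every matrix of this form belongs to L'. In other words, L' coincides with the set { (xv − yt)·φ(f) + (xu − yv)·φ(g) + [x,y]·φ(h) : f, g, h ∈ K[T,U,V] }. -/
open Matrix MvPolynomial

attribute [local instance 100] LieRing.ofAssociativeRing

noncomputable section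

variable (K : Type*) [Field K] [CharZero K]

/-- The first generic traceless 2×2 matrix `x = !![x₁₁, x₁₂; x₂₁, -x₁₁]` over
`R = K[x₁₁,x₁₂,x₂₁,y₁₁,y₁₂,y₂₁]`, realized as `MvPolynomial (Fin 6) K` with
`x₁₁ = X 0, x₁₂ = X 1, x₂₁ = X 2, y₁₁ = X 3, y₁₂ = X 4, y₂₁ = X 5`. -/
def x : Matrix (Fin 2) (Fin 2) (MvPolynomial (Fin 6) K) := !![X 0, X 1; X 2, -(X 0)]

/-- The second generic traceless 2×2 matrix `y = !![y₁₁, y₁₂; y₂₁, -y₁₁]`. -/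
def y : Matrix (Fin 2) (Fin 2) (MvPolynomial (Fin 6) K) := !![X 3, X 4; X 5, -(X 3)]

/-- `t = tr(x²)`. -/
def t : MvPolynomial (Fin 6) K := (x K * x K).trace

/-- `u = tr(y²)`. -/
def u : MvPolynomial (Fin 6) K := (y K * y K).trace

/-- `v = tr(xy)`. -/
def v : MvPolynomial (Fin 6) K := (x K * y K).trace

/-- `φ : K[T,U,V] → R`, the `K`-algebra homomorphism sending `T ↦ t`, `U ↦ u`, `V ↦ v`. -/
def φ : MvPolynomial (Fin 3) K →ₐ[K] MvPolynomial (Fin 6) K := aeval ![t K, u K, v K]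

/-- `L`, the Lie `K`-subalgebra of `M₂(R)` generated by the generic matrices `x` and `y`. -/
def L : LieSubalgebra K (Matrix (Fin 2) (Fin 2) (MvPolynomial (Fin 6) K)) :=
  LieSubalgebra.lieSpan K _ {x K, y K}


/-! Put `C = [x,y]`, `A = xv − yt` and `B = xu − yv`. A traceless `2×2` matrix `a` satisfies
`a² = tr(a²)/2`, which gives `[x,C] = −2A` and `[y,C] = −2B`; bilinearity alone gives
`[x,A] = −tC`, `[x,B] = [y,A] = −vC` and `[y,B] = −uC`. So the space `M` of the matrices
`φ(f)A + φ(g)B + φ(h)C` is stable under `ad x` and `ad y` and contains `[x,y]`, which forces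
`[L,L] ⊆ M`. Conversely `C ∈ L'`, and since `L'` is stable under `ad x`, `ad y`, the relations
above (with `2` inverted) take `φ(f)C ∈ L'` to `φ(f)A, φ(f)B ∈ L'` and to
`φ(fT)C, φ(fU)C, φ(fV)C ∈ L'`. -/

theorem Matrix.lie_lie_self_of_trace_eq_zero {R : Type*} [CommRing R]
    {a b : Matrix (Fin 2) (Fin 2) R} (ha : a.trace = 0) (hb : b.trace = 0) :
    ⁅a, ⁅a, b⁆⁆ = 2 • ((a * a).trace • b - (a * b).trace • a) := by
  rw [Matrix.trace_fin_two] at ha hb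
  have ha : a 1 1 = -a 0 0 := by linear_combination ha
  have hb : b 1 1 = -b 0 0 := by linear_combination hb
  ext i j
  fin_cases i <;> fin_cases j <;>
    simp only [Ring.lie_def, Fin.zero_eta, Fin.mk_one, Fin.isValue, sub_apply, mul_apply,
      smul_apply, smul_eq_mul, nsmul_eq_mul, Nat.cast_ofNat, Fin.sum_univ_two, trace_fin_two, ha, hb]
      <;> ring

theorem LieSubalgebra.lie_mem_of_mem_lieSpan {R G : Type*} [CommRing R] [LieRing G]
    [LieAlgebra R G] {s : Set G} {M : Submodule R G}
    (hs : ∀ a ∈ s, ∀ b ∈ s, ⁅a, b⁆ ∈ M) (hM : ∀ a ∈ s, ∀ m ∈ M, ⁅a, m⁆ ∈ M) {a b : G}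
    (ha : a ∈ lieSpan R G s) (hb : b ∈ lieSpan R G s) : ⁅a, b⁆ ∈ M := by
  set N := Submodule.span R s ⊔ M
  have hMN : M ≤ N := le_sup_right
  -- closed under brackets by the Jacobi identity, because `M ≤ N`
  let W : LieSubalgebra R G :=
    { carrier := {z | z ∈ N ∧ N ≤ M.comap (LieAlgebra.ad R G z)}
      add_mem' := fun ⟨hz, hzN⟩ ⟨hw, hwN⟩ => ⟨N.add_mem hz hw, fun n hn => by
        simpa using M.add_mem (hzN hn) (hwN hn)⟩
      zero_mem' := ⟨N.zero_mem, fun n _ => by simp⟩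
      smul_mem' := fun c z ⟨hz, hzN⟩ => ⟨N.smul_mem c hz, fun n hn => by
        simpa using M.smul_mem c (hzN hn)⟩
      lie_mem' := fun {z w} ⟨_, hzN⟩ ⟨hw, hwN⟩ => ⟨hMN (hzN hw), fun n hn => by
        simpa [lie_lie] using M.sub_mem (hzN (hMN (hwN hn))) (hwN (hMN (hzN hn)))⟩ }
  have hsW : lieSpan R G s ≤ W := by
    refine lieSpan_le.mpr fun z hz => ⟨Submodule.mem_sup_left (Submodule.subset_span hz), ?_⟩
    exact sup_le (Submodule.span_le.mpr (hs z hz)) (hM z hz)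
  exact (hsW ha).2 (hsW hb).1

theorem LieSubalgebra.coe_mem_of_mem_derivedSeries_one {R G : Type*} [CommRing R] [LieRing G]
    [LieAlgebra R G] {H : LieSubalgebra R G} {M : Submodule R G}
    (h : ∀ a ∈ H, ∀ b ∈ H, ⁅a, b⁆ ∈ M) {z : H} (hz : z ∈ LieAlgebra.derivedSeries R H 1) :
    (z : G) ∈ M := by
  have hz : z ∈ Submodule.span R {⁅a, b⁆ | (a : H) (b : H)} := by
    rwa [← LieAlgebra.coe_derivedSeries_one_eq]
  refine Submodule.span_le (p := M.comap H.incl.toLinearMap) |>.mpr ?_ hz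
  rintro _ ⟨a, b, rfl⟩
  exact h a a.2 b b.2

local notation "M₂" => Matrix (Fin 2) (Fin 2) (MvPolynomial (Fin 6) K)

def A : M₂ := v K • x K - t K • y K

def B : M₂ := u K • x K - v K • y K

def M : Submodule K M₂ where
  carrier := {m | ∃ f g h : MvPolynomial (Fin 3) K,
    m = φ K f • A K + φ K g • B K + φ K h • ⁅x K, y K⁆}
  add_mem' := by
    rintro _ _ ⟨f₁, g₁, h₁, rfl⟩ ⟨f₂, g₂, h₂, rfl⟩
    exact ⟨f₁ + f₂, g₁ + g₂, h₁ + h₂, by simp only [map_add, add_smul]; abel⟩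
  zero_mem' := ⟨0, 0, 0, by simp⟩
  smul_mem' := by
    rintro c _ ⟨f, g, h, rfl⟩
    exact ⟨c • f, c • g, c • h, by simp only [smul_add, map_smul, smul_assoc]⟩

def derivedL : Submodule K M₂ :=
  (LieAlgebra.derivedSeries K (L K) 1).toSubmodule.map (L K).incl.toLinearMap

section

variable {K}

omit [CharZero K]

theorem trace_x : (x K).trace = 0 := by simp [x, Matrix.trace_fin_two]

theorem trace_y : (y K).trace = 0 := by simp [y, Matrix.trace_fin_two]

theorem lie_x_lie_x_y : ⁅x K, ⁅x K, y K⁆⁆ = -(2 • A K) := by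
  rw [Matrix.lie_lie_self_of_trace_eq_zero trace_x trace_y, A, t, v]
  module

theorem lie_y_lie_x_y : ⁅y K, ⁅x K, y K⁆⁆ = -(2 • B K) := by
  rw [← lie_skew (x K) (y K), lie_neg, Matrix.lie_lie_self_of_trace_eq_zero trace_y trace_x,
    B, u, v, Matrix.trace_mul_comm (y K) (x K)]

theorem lie_x_A : ⁅x K, A K⁆ = -(t K • ⁅x K, y K⁆) := by
  simp [A]

theorem lie_x_B : ⁅x K, B K⁆ = -(v K • ⁅x K, y K⁆) := by
  simp [B]

theorem lie_y_A : ⁅y K, A K⁆ = -(v K • ⁅x K, y K⁆) := by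
  rw [A, lie_sub, lie_smul, lie_smul, lie_self, ← lie_skew (x K) (y K)]
  simp only [smul_zero, sub_zero, smul_neg, neg_neg]

theorem lie_y_B : ⁅y K, B K⁆ = -(u K • ⁅x K, y K⁆) := by
  rw [B, lie_sub, lie_smul, lie_smul, lie_self, ← lie_skew (x K) (y K)]
  simp only [smul_zero, sub_zero, smul_neg, neg_neg]

@[simp] theorem φ_X_zero : φ K (X 0) = t K := by simp [φ]

@[simp] theorem φ_X_one : φ K (X 1) = u K := by simp [φ]

@[simp] theorem φ_X_two : φ K (X 2) = v K := by simp [φ]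

theorem lie_x_y_mem_M : ⁅x K, y K⁆ ∈ M K := ⟨0, 0, 1, by simp⟩

theorem lie_x_mem_M {m : M₂} (hm : m ∈ M K) : ⁅x K, m⁆ ∈ M K := by
  obtain ⟨f, g, h, rfl⟩ := hm
  refine ⟨-2 * h, 0, -(f * X 0 + g * X 2), ?_⟩
  simp only [lie_add, lie_smul, lie_x_A, lie_x_B, lie_x_lie_x_y, map_mul, map_add, map_neg,
    map_ofNat, map_zero, φ_X_zero, φ_X_two]
  module

theorem lie_y_mem_M {m : M₂} (hm : m ∈ M K) : ⁅y K, m⁆ ∈ M K := by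
  obtain ⟨f, g, h, rfl⟩ := hm
  refine ⟨0, -2 * h, -(f * X 2 + g * X 1), ?_⟩
  simp only [lie_add, lie_smul, lie_y_A, lie_y_B, lie_y_lie_x_y, map_mul, map_add, map_neg,
    map_ofNat, map_zero, φ_X_one, φ_X_two]
  module

theorem derivedL_le_M : derivedL K ≤ M K := by
  rintro _ ⟨z, hz, rfl⟩
  refine LieSubalgebra.coe_mem_of_mem_derivedSeries_one (fun a ha b hb => ?_) hz
  refine LieSubalgebra.lie_mem_of_mem_lieSpan ?_ ?_ ha hb
  · rintro a (rfl | rfl) b (rfl | rfl)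
    · simp
    · exact lie_x_y_mem_M
    · rw [← lie_skew]; exact neg_mem lie_x_y_mem_M
    · simp
  · rintro a (rfl | rfl) m hm
    exacts [lie_x_mem_M hm, lie_y_mem_M hm]

theorem x_mem_L : x K ∈ L K := LieSubalgebra.subset_lieSpan (Set.mem_insert _ _)

theorem y_mem_L : y K ∈ L K := LieSubalgebra.subset_lieSpan (Set.mem_insert_of_mem _ rfl)

theorem lie_mem_derivedL {z m : M₂} (hz : z ∈ L K) (hm : m ∈ derivedL K) :
    ⁅z, m⁆ ∈ derivedL K := by
  obtain ⟨w, hw, rfl⟩ := hm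
  refine Submodule.mem_map.mpr ⟨⁅(⟨z, hz⟩ : L K), w⁆, ?_, ?_⟩
  · exact (LieAlgebra.derivedSeries K (L K) 1).lie_mem hw
  · exact LieSubalgebra.coe_bracket _ _ _

theorem lie_x_y_mem_derivedL : ⁅x K, y K⁆ ∈ derivedL K := by
  refine ⟨⁅(⟨x K, x_mem_L⟩ : L K), ⟨y K, y_mem_L⟩⁆, ?_, LieSubalgebra.coe_bracket _ _ _⟩
  have h : ⁅(⟨x K, x_mem_L⟩ : L K), ⟨y K, y_mem_L⟩⁆ ∈
      Submodule.span K {⁅a, b⁆ | (a : L K) (b : L K)} :=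
    Submodule.subset_span ⟨_, _, rfl⟩
  rwa [← LieAlgebra.coe_derivedSeries_one_eq] at h

variable [CharZero K]

theorem mem_derivedL_of_two_nsmul_mem {m : M₂} (hm : 2 • m ∈ derivedL K) : m ∈ derivedL K := by
  rwa [← Nat.cast_smul_eq_nsmul K, Nat.cast_ofNat, Submodule.smul_mem_iff _ two_ne_zero] at hm

theorem smul_A_mem_derivedL {s : MvPolynomial (Fin 6) K} (hs : s • ⁅x K, y K⁆ ∈ derivedL K) :
    s • A K ∈ derivedL K := by
  have h := lie_mem_derivedL x_mem_L hs
  rw [lie_smul, lie_x_lie_x_y, smul_neg, neg_mem_iff, smul_comm] at h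
  exact mem_derivedL_of_two_nsmul_mem h

theorem smul_B_mem_derivedL {s : MvPolynomial (Fin 6) K} (hs : s • ⁅x K, y K⁆ ∈ derivedL K) :
    s • B K ∈ derivedL K := by
  have h := lie_mem_derivedL y_mem_L hs
  rw [lie_smul, lie_y_lie_x_y, smul_neg, neg_mem_iff, smul_comm] at h
  exact mem_derivedL_of_two_nsmul_mem h

theorem φ_smul_lie_x_y_mem_derivedL (f : MvPolynomial (Fin 3) K) :
    φ K f • ⁅x K, y K⁆ ∈ derivedL K := by
  induction f using MvPolynomial.induction_on with
  | C c =>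
    rw [φ, aeval_C, algebraMap_smul]
    exact (derivedL K).smul_mem c lie_x_y_mem_derivedL
  | add f g hf hg =>
    rw [map_add, add_smul]
    exact add_mem hf hg
  | mul_X f i hf =>
    rw [map_mul, mul_comm, mul_smul]
    fin_cases i
    · have h := lie_mem_derivedL x_mem_L (smul_A_mem_derivedL hf)
      rwa [lie_smul, lie_x_A, smul_neg, neg_mem_iff, smul_comm, ← φ_X_zero] at h
    · have h := lie_mem_derivedL y_mem_L (smul_B_mem_derivedL hf)
      rwa [lie_smul, lie_y_B, smul_neg, neg_mem_iff, smul_comm, ← φ_X_one] at h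
    · have h := lie_mem_derivedL y_mem_L (smul_A_mem_derivedL hf)
      rwa [lie_smul, lie_y_A, smul_neg, neg_mem_iff, smul_comm, ← φ_X_two] at h

theorem M_le_derivedL : M K ≤ derivedL K := by
  rintro _ ⟨f, g, h, rfl⟩
  refine add_mem (add_mem ?_ ?_) (φ_smul_lie_x_y_mem_derivedL h)
  exacts [smul_A_mem_derivedL (φ_smul_lie_x_y_mem_derivedL f),
    smul_B_mem_derivedL (φ_smul_lie_x_y_mem_derivedL g)]

theorem derivedL_eq_M : derivedL K = M K :=
  le_antisymm derivedL_le_M M_le_derivedL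

end

/-- The derived ideal `L' = [L,L]` of `L` consists exactly of the matrices of the form
`(xv − yt)·φ(f) + (xu − yv)·φ(g) + [x,y]·φ(h)` with `f, g, h ∈ K[T,U,V]`. -/
theorem stmt_0 (m : Matrix (Fin 2) (Fin 2) (MvPolynomial (Fin 6) K)) :
    (∃ z : L K, z ∈ LieAlgebra.derivedSeries K (L K) 1 ∧
        (z : Matrix (Fin 2) (Fin 2) (MvPolynomial (Fin 6) K)) = m) ↔
    ∃ f g h : MvPolynomial (Fin 3) K,
      m = φ K f • (v K • x K - t K • y K) + φ K g • (u K • x K - v K • y K)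
          + φ K h • ⁅x K, y K⁆ :=
  SetLike.ext_iff.mp derivedL_eq_M m
end
end

section
/- If polynomials f, g, h ∈ K[T,U,V] satisfy (xv − yt)·φ(f) + (xu − yv)·φ(g) + [x,y]·φ(h) = 0 in M₂(R), then f = g = h = 0. (Hence the derived ideal L' of L is a free module over the image of φ with free generators xv − yt, xu − yv and [x,y].) -/
/-! `φ` is injective: specializing `x` to `!![0, 1; T², 0]` and `y` to `!![S, 0; V², -S]` sends
`t, u, v` to `2T², 2S², V²`, so `φ` followed by this specialization is `expand 2` after rescaling two variables.
The three generators are linearly independent over the domain `R`, since the determinant of their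
`(1,1), (1,2), (2,1)` entries is `±1` at `x = e₁₂`, `y = e₂₁`. -/

open Matrix MvPolynomial

theorem Matrix.linearIndependent_of_det_entries_ne_zero {ι m n R : Type*} [Fintype ι]
    [DecidableEq ι] [CommRing R] [NoZeroDivisors R] (A : ι → Matrix m n R) (p : ι → m × n)
    (hA : (Matrix.of fun i j => A j (p i).1 (p i).2).det ≠ 0) :
    LinearIndependent R A := by
  refine Fintype.linearIndependent_iff.mpr fun c hc => congrFun ?_
  refine eq_zero_of_mulVec_eq_zero hA (funext fun i => ?_)
  simpa [mulVec, dotProduct, mul_comm, Matrix.sum_apply] using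
    congrFun (congrFun hc (p i).1) (p i).2

lemma MvPolynomial.aeval_C_mul_X_injective {σ K : Type*} [Field K] (c : σ → K)
    (hc : ∀ i, c i ≠ 0) :
    Function.Injective (aeval fun i => C (c i) * X i : MvPolynomial σ K →ₐ[K] MvPolynomial σ K) := by
  refine Function.LeftInverse.injective (g := aeval fun i => C (c i)⁻¹ * X i) fun p => ?_
  rw [← AlgHom.comp_apply, show (aeval _).comp (aeval _) = AlgHom.id K _ from ?_, AlgHom.id_apply]
  ext i : 1
  simp [← mul_assoc, ← C_mul, hc]

section

variable {K : Type*} [Field K]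

lemma t_eq : t K = 2 * X 0 ^ 2 + 2 * X 1 * X 2 := by
  rw [t, x, mul_fin_two, trace_fin_two_of]; ring

lemma u_eq : u K = 2 * X 3 ^ 2 + 2 * X 4 * X 5 := by
  rw [u, y, mul_fin_two, trace_fin_two_of]; ring

lemma v_eq : v K = 2 * X 0 * X 3 + X 1 * X 5 + X 2 * X 4 := by
  rw [v, x, y, mul_fin_two, trace_fin_two_of]; ring

lemma linearIndependent_generators :
    LinearIndependent (MvPolynomial (Fin 6) K)
      ![v K • x K - t K • y K, u K • x K - v K • y K, ⁅x K, y K⁆] := by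
  refine Matrix.linearIndependent_of_det_entries_ne_zero _ ![(0, 0), (0, 1), (1, 0)] fun h => ?_
  have := congrArg (eval ![0, 1, 0, 0, 0, 1]) h
  simp [det_fin_three, t_eq, u_eq, v_eq, x, y, Ring.lie_def] at this

/-- `x ↦ !![0, 1; T², 0]`, `y ↦ !![S, 0; V², -S]`, where `T, S, V = X 0, X 1, X 2`. -/
noncomputable def specialization : MvPolynomial (Fin 6) K →ₐ[K] MvPolynomial (Fin 3) K :=
  aeval ![0, 1, X 0 ^ 2, X 1, 0, X 2 ^ 2]

lemma specialization_comp_φ :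
    specialization.comp (φ K) = (expand 2).comp (aeval fun i => C (![2, 2, 1] i) * X i) := by
  ext i : 1
  fin_cases i <;> simp [specialization, φ, t_eq, u_eq, v_eq, map_ofNat]

lemma φ_injective [NeZero (2 : K)] : Function.Injective (φ K) := by
  refine Function.Injective.of_comp (f := specialization) ?_
  rw [← AlgHom.coe_comp, specialization_comp_φ, AlgHom.coe_comp]
  refine (expand_injective two_pos).comp (aeval_C_mul_X_injective _ fun i => ?_)
  fin_cases i <;> simp [two_ne_zero]

end

variable (K : Type*) [Field K] [CharZero K]

/-- If `(xv − yt)·φ(f) + (xu − yv)·φ(g) + [x,y]·φ(h) = 0` in `M₂(R)`, then `f = g = h = 0`;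
hence `xv − yt`, `xu − yv`, `[x,y]` are free generators of `L'` over the image of `φ`. -/
theorem stmt_1 (f g h : MvPolynomial (Fin 3) K)
    (hfgh : φ K f • (v K • x K - t K • y K) + φ K g • (u K • x K - v K • y K)
        + φ K h • ⁅x K, y K⁆ = 0) :
    f = 0 ∧ g = 0 ∧ h = 0 := by
  have hφ := Fintype.linearIndependent_iff.mp linearIndependent_generators ![φ K f, φ K g, φ K h]
    (by simpa [Fin.sum_univ_three] using hfgh)
  have hφ₀ (p) : φ K p = 0 → p = 0 := (map_eq_zero_iff _ φ_injective).mp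
  exact ⟨hφ₀ f (hφ 0), hφ₀ g (hφ 1), hφ₀ h (hφ 2)⟩
end

section
/- The following eight identities hold in M₂(R): [xv − yt, x, x] = 2(xv − yt)t, [xv − yt, x, y] = 2(xu − yv)t, [xv − yt, y, x] = 2(xv − yt)v, [xv − yt, y, y] = 2(xu − yv)v, [xu − yv, x, x] = 2(xv − yt)v, [xu − yv, x, y] = 2(xu − yv)v, [xu − yv, y, x] = 2(xv − yt)u, and [xu − yv, y, y] = 2(xu − yv)u. -/
open Matrix MvPolynomial

noncomputable section

variable (K : Type*) [Field K] [CharZero K]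

/-! Traceless `2 × 2` matrices anticommute up to a scalar, `ab + ba = tr(ab) • 1`, so every double
commutator of them is `⁅⁅a, b⁆, c⁆ = 2 tr(bc) • a - 2 tr(ac) • b`. The eight identities follow,
since `xv - yt` is trace-orthogonal to `x` and `xu - yv` to `y`. -/

namespace Matrix

variable {R : Type*} [CommRing R] {a b c : Matrix (Fin 2) (Fin 2) R}

theorem mul_add_mul_eq_trace_smul_one_of_trace_eq_zero (ha : a.trace = 0) (hb : b.trace = 0) :
    a * b + b * a = (a * b).trace • 1 := by
  have ha' : a 1 1 = -a 0 0 := eq_neg_of_add_eq_zero_right (trace_fin_two a ▸ ha)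
  have hb' : b 1 1 = -b 0 0 := eq_neg_of_add_eq_zero_right (trace_fin_two b ▸ hb)
  rw [eta_fin_two a, eta_fin_two b, ha', hb']
  ext i j
  fin_cases i <;> fin_cases j <;> simp [trace_fin_two_of] <;> ring

theorem lie_lie_eq_of_trace_eq_zero (ha : a.trace = 0) (hb : b.trace = 0) (hc : c.trace = 0) :
    ⁅⁅a, b⁆, c⁆ = (2 * (b * c).trace) • a - (2 * (a * c).trace) • b := by
  have hbc := mul_add_mul_eq_trace_smul_one_of_trace_eq_zero hb hc
  have hac := mul_add_mul_eq_trace_smul_one_of_trace_eq_zero ha hc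
  calc ⁅⁅a, b⁆, c⁆ = a * (b * c + c * b) + (b * c + c * b) * a - (a * c + c * a) * b
        - b * (a * c + c * a) := by simp only [Ring.lie_def]; noncomm_ring
    _ = _ := by rw [hbc, hac]; simp only [mul_smul_comm, smul_mul_assoc, mul_one, one_mul]; module

end Matrix

/-- The eight identities `[xv − yt, x, x] = 2(xv − yt)t`, ..., `[xu − yv, y, y] = 2(xu − yv)u`
in `M₂(R)`. -/
theorem stmt_4 :
    ⁅⁅v K • x K - t K • y K, x K⁆, x K⁆ = (2 * t K) • (v K • x K - t K • y K) ∧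
    ⁅⁅v K • x K - t K • y K, x K⁆, y K⁆ = (2 * t K) • (u K • x K - v K • y K) ∧
    ⁅⁅v K • x K - t K • y K, y K⁆, x K⁆ = (2 * v K) • (v K • x K - t K • y K) ∧
    ⁅⁅v K • x K - t K • y K, y K⁆, y K⁆ = (2 * v K) • (u K • x K - v K • y K) ∧
    ⁅⁅u K • x K - v K • y K, x K⁆, x K⁆ = (2 * v K) • (v K • x K - t K • y K) ∧
    ⁅⁅u K • x K - v K • y K, x K⁆, y K⁆ = (2 * v K) • (u K • x K - v K • y K) ∧
    ⁅⁅u K • x K - v K • y K, y K⁆, x K⁆ = (2 * u K) • (v K • x K - t K • y K) ∧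
    ⁅⁅u K • x K - v K • y K, y K⁆, y K⁆ = (2 * u K) • (u K • x K - v K • y K) := by
  have hx : (x K).trace = 0 := by simp [x, trace_fin_two_of]
  have hy : (y K).trace = 0 := by simp [y, trace_fin_two_of]
  have htr {α β : MvPolynomial (Fin 6) K} : (α • x K - β • y K).trace = 0 := by
    simp [hx, hy]
  have hxx : (x K * x K).trace = t K := rfl
  have hyy : (y K * y K).trace = u K := rfl
  have hxy : (x K * y K).trace = v K := rfl
  have hyx : (y K * x K).trace = v K := trace_mul_comm _ _
  simp only [lie_lie_eq_of_trace_eq_zero htr hx hx, lie_lie_eq_of_trace_eq_zero htr hx hy,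
    lie_lie_eq_of_trace_eq_zero htr hy hx, lie_lie_eq_of_trace_eq_zero htr hy hy,
    sub_mul, smul_mul, trace_sub, trace_smul, hxx, hyy, hxy, hyx, smul_eq_mul]
  and_intros <;> module
end
end

section
/- For all natural numbers a, c ≥ 0 and b ≥ 1, the following identity holds in M₂(R): 2^{a+b+c+1}·(xv − yt)·tᵃuᵇvᶜ = [x,y,y]·(ad y)^{2b−1}·(ad x)^{2a+1}·(ad y ad x)ᶜ. -/
open Matrix MvPolynomial

noncomputable section

variable (K : Type*) [Field K] [CharZero K]

/-- The right adjoint action `z ↦ z(ad w) = [z,w]`. -/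
def ad (w z : Matrix (Fin 2) (Fin 2) (MvPolynomial (Fin 6) K)) :
    Matrix (Fin 2) (Fin 2) (MvPolynomial (Fin 6) K) := ⁅z, w⁆

/-!
For traceless `2 × 2` matrices, Cayley–Hamilton (`B² = ½ tr(B²)` and `AB + BA = tr(AB)`) gives
`[A,B,B] = 2 tr(B²) A - 2 tr(AB) B`. With `w = [x,y]` and `s = vx - ty` this makes `w` an
eigenvector of `(ad y)²` with eigenvalue `2u`, sends `w` to `2s` under `ad x`, and makes `s` an
eigenvector of `(ad x)²` and of `ad y ad x` with eigenvalues `2t` and `2v`. Iterating these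
relations gives the identity, in any Lie algebra over a commutative ring where the two bracket
relations hold.
-/

namespace Function

variable {R M : Type*} [Monoid R] [MulAction R M] {f : M → M}

theorem iterate_smul_comm (hf : ∀ r : R, Function.Commute f (r • ·)) (n : ℕ) (r : R) (z : M) :
    f^[n] (r • z) = r • f^[n] z :=
  (hf r).iterate_left n z

theorem iterate_mul_apply_eq_pow_smul (hf : ∀ r : R, Function.Commute f (r • ·)) {k : ℕ}
    {r : R} {z : M} (h : f^[k] z = r • z) (n : ℕ) : f^[k * n] z = r ^ n • z := by
  rw [iterate_mul]
  induction n with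
  | zero => simp
  | succ n ih => rw [iterate_succ_apply', ih, iterate_smul_comm hf, h, smul_smul, pow_succ]

end Function

theorem Matrix.lie_lie_eq_of_trace_eq_zero_s5 {R : Type*} [CommRing R]
    {A B : Matrix (Fin 2) (Fin 2) R} (hA : A.trace = 0) (hB : B.trace = 0) :
    ⁅⁅A, B⁆, B⁆ = (2 * (B * B).trace) • A - (2 * (A * B).trace) • B := by
  rw [trace_fin_two] at hA hB
  have hA' : A 1 1 = -A 0 0 := by linear_combination hA
  have hB' : B 1 1 = -B 0 0 := by linear_combination hB
  ext i j
  fin_cases i <;> fin_cases j <;>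
    simp [Ring.lie_def, mul_apply, Fin.sum_univ_two, trace_fin_two, hA', hB'] <;> ring

section LieAlgebra

variable {R L : Type*} [CommRing R] [LieRing L] [LieAlgebra R L] {X Y : L} {t u v : R}

theorem lie_sub_smul_lie_right (g h : R) : ⁅g • X - h • Y, Y⁆ = g • ⁅X, Y⁆ := by
  simp [sub_lie, smul_lie]

theorem lie_sub_smul_lie_left (g h : R) : ⁅g • X - h • Y, X⁆ = h • ⁅X, Y⁆ := by
  rw [sub_lie, smul_lie, smul_lie, lie_self, smul_zero, zero_sub, ← lie_skew, smul_neg, neg_neg]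

theorem lie_lie_lie_eq_smul_lie (hY : ⁅⁅X, Y⁆, Y⁆ = (2 * u) • X - (2 * v) • Y) :
    ⁅⁅⁅X, Y⁆, Y⁆, Y⁆ = (2 * u) • ⁅X, Y⁆ := by
  rw [hY, lie_sub_smul_lie_right]

theorem lie_lie_eq_two_smul (hX : ⁅⁅Y, X⁆, X⁆ = (2 * t) • Y - (2 * v) • X) :
    ⁅⁅X, Y⁆, X⁆ = (2 : R) • (v • X - t • Y) := by
  rw [← lie_skew X Y, neg_lie, hX, smul_sub, smul_smul, smul_smul, neg_sub]

theorem lie_lie_sub_smul_left (hX : ⁅⁅Y, X⁆, X⁆ = (2 * t) • Y - (2 * v) • X) :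
    ⁅⁅v • X - t • Y, X⁆, X⁆ = (2 * t) • (v • X - t • Y) := by
  rw [lie_sub_smul_lie_left, smul_lie, lie_lie_eq_two_smul hX, smul_smul, mul_comm]

theorem lie_lie_sub_smul_right (hX : ⁅⁅Y, X⁆, X⁆ = (2 * t) • Y - (2 * v) • X) :
    ⁅⁅v • X - t • Y, Y⁆, X⁆ = (2 * v) • (v • X - t • Y) := by
  rw [lie_sub_smul_lie_right, smul_lie, lie_lie_eq_two_smul hX, smul_smul, mul_comm]

theorem iterate_lie_right_lie_lie_eq_smul (hY : ⁅⁅X, Y⁆, Y⁆ = (2 * u) • X - (2 * v) • Y)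
    (hX : ⁅⁅Y, X⁆, X⁆ = (2 * t) • Y - (2 * v) • X) (a b c : ℕ) (hb : 1 ≤ b) :
    ((⁅·, X⁆) ∘ (⁅·, Y⁆))^[c] ((⁅·, X⁆)^[2 * a + 1] ((⁅·, Y⁆)^[2 * b - 1] ⁅⁅X, Y⁆, Y⁆)) =
      ((2 : R) ^ (a + b + c + 1) * t ^ a * u ^ b * v ^ c) • (v • X - t • Y) := by
  have adX_smul (r : R) : Function.Commute (⁅·, X⁆) (r • ·) := fun z => smul_lie r z X
  have adY_smul (r : R) : Function.Commute (⁅·, Y⁆) (r • ·) := fun z => smul_lie r z Y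
  have adYX_smul (r : R) : Function.Commute ((⁅·, X⁆) ∘ (⁅·, Y⁆)) (r • ·) :=
    (adX_smul r).comp_left (adY_smul r)
  have stage_y : (⁅·, Y⁆)^[2 * b - 1] ⁅⁅X, Y⁆, Y⁆ = (2 * u) ^ b • ⁅X, Y⁆ := by
    rw [← Function.iterate_succ_apply, Nat.succ_eq_add_one, Nat.sub_add_cancel (by omega)]
    exact Function.iterate_mul_apply_eq_pow_smul (k := 2) adY_smul (lie_lie_lie_eq_smul_lie hY) b
  have stage_x : (⁅·, X⁆)^[2 * a + 1] ⁅X, Y⁆ = (2 * (2 * t) ^ a) • (v • X - t • Y) := by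
    rw [Function.iterate_succ_apply, lie_lie_eq_two_smul hX, Function.iterate_smul_comm adX_smul,
      Function.iterate_mul_apply_eq_pow_smul (k := 2) adX_smul (lie_lie_sub_smul_left hX) a,
      smul_smul]
  have stage_yx : ((⁅·, X⁆) ∘ (⁅·, Y⁆))^[c] (v • X - t • Y) = (2 * v) ^ c • (v • X - t • Y) := by
    simpa using
      Function.iterate_mul_apply_eq_pow_smul (k := 1) adYX_smul (lie_lie_sub_smul_right hX) c
  rw [stage_y, Function.iterate_smul_comm adX_smul, stage_x, smul_smul,
    Function.iterate_smul_comm adYX_smul, stage_yx, smul_smul]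
  congr 1
  ring

end LieAlgebra

/-- For `a, c ≥ 0` and `b ≥ 1`:
`2^{a+b+c+1}(xv − yt)tᵃuᵇvᶜ = [x,y,y](ad y)^{2b−1}(ad x)^{2a+1}(ad y ad x)ᶜ`. -/
theorem stmt_5 (a b c : ℕ) (hb : 1 ≤ b) :
    ((2 : MvPolynomial (Fin 6) K) ^ (a + b + c + 1) * t K ^ a * u K ^ b * v K ^ c) •
        (v K • x K - t K • y K) =
      (ad K (x K) ∘ ad K (y K))^[c]
        ((ad K (x K))^[2 * a + 1] ((ad K (y K))^[2 * b - 1] ⁅⁅x K, y K⁆, y K⁆)) := by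
  let M := Matrix (Fin 2) (Fin 2) (MvPolynomial (Fin 6) K)
  let := LieRing.ofAssociativeRing (A := M)
  have hx : (x K).trace = 0 := by simp [x, trace_fin_two]
  have hy : (y K).trace = 0 := by simp [y, trace_fin_two]
  have hyx := lie_lie_eq_of_trace_eq_zero_s5 hy hx
  rw [trace_mul_comm (y K)] at hyx
  exact (iterate_lie_right_lie_lie_eq_smul (L := M) (lie_lie_eq_of_trace_eq_zero_s5 hx hy) hyx
    a b c hb).symm
end
end

section
/- Let S be a commutative ring, let g, A, B ∈ S satisfy A² = B²·g + 2B, and let M be a 3×3 matrix over S with M³ = g·M. Set Q = 1 + A·M + B·M² (where 1 denotes the 3×3 identity matrix). Then Q² = 1 + 2A(1 + Bg)·M + (A² + B²g + 2B)·M², and consequently 2A²·(Q − 1) − B·(Q² − 1) = 2AB·M. -/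
/-!
Because `x³ = g x`, products of `1, x, x²` stay in their span, so `Q²` is again a combination of
`1, x, x²`. In `2A²(Q - 1) - B(Q² - 1)` the coefficient of `x²` is `B(A² - B²g - 2B) = 0` and that
of `x` is `2A(A² - B²g - B) = 2AB`.
-/

open Matrix

section CubicRelation

variable {S R : Type*} [CommRing S] [Ring R] [Algebra S R] {g : S} {x : R}

theorem pow_four_eq_smul_sq_of_pow_three_eq_smul (hx : x ^ 3 = g • x) : x ^ 4 = g • x ^ 2 := by
  rw [pow_succ, hx, smul_mul_assoc, ← sq]

theorem sq_one_add_smul_add_smul_sq (A B : S) (hx : x ^ 3 = g • x) :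
    (1 + A • x + B • x ^ 2) ^ 2 =
      1 + (2 * A * (1 + B * g)) • x + (A ^ 2 + B ^ 2 * g + 2 * B) • x ^ 2 := by
  have expand : (1 + A • x + B • x ^ 2) ^ 2 =
      1 + (2 * A) • x + (A ^ 2 + 2 * B) • x ^ 2 + (2 * A * B) • x ^ 3 + B ^ 2 • x ^ 4 := by
    rw [sq]
    simp only [add_mul, mul_add, one_mul, mul_one, smul_mul_smul_comm, (sq x).symm,
      (pow_succ x 2).symm, (pow_succ' x 2).symm, (pow_add x 2 2).symm]
    module
  rw [expand, hx, pow_four_eq_smul_sq_of_pow_three_eq_smul hx]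
  module

theorem smul_sub_one_sub_smul_sq_sub_one {A B : S} (hAB : A ^ 2 = B ^ 2 * g + 2 * B)
    (hx : x ^ 3 = g • x) :
    (2 * A ^ 2) • ((1 + A • x + B • x ^ 2) - 1) - B • ((1 + A • x + B • x ^ 2) ^ 2 - 1) =
      (2 * A * B) • x := by
  rw [sq_one_add_smul_add_smul_sq A B hx]
  linear_combination (norm := module) hAB • ((2 * A) • x + B • x ^ 2)

end CubicRelation

/-- If `A² = B²g + 2B` in a commutative ring `S`, `M ∈ M₃(S)` satisfies `M³ = g·M`, and
`Q = 1 + A·M + B·M²`, then `Q² = 1 + 2A(1 + Bg)·M + (A² + B²g + 2B)·M²` and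
`2A²·(Q − 1) − B·(Q² − 1) = 2AB·M`. -/
theorem stmt_14 (S : Type*) [CommRing S] (g A B : S)
    (hAB : A ^ 2 = B ^ 2 * g + 2 * B)
    (M : Matrix (Fin 3) (Fin 3) S) (hM : M ^ 3 = g • M) :
    (1 + A • M + B • M ^ 2) ^ 2 =
        1 + (2 * A * (1 + B * g)) • M + (A ^ 2 + B ^ 2 * g + 2 * B) • M ^ 2 ∧
    (2 * A ^ 2) • ((1 + A • M + B • M ^ 2) - 1) -
        B • ((1 + A • M + B • M ^ 2) ^ 2 - 1) = (2 * A * B) • M :=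
  ⟨sq_one_add_smul_add_smul_sq A B hM, smul_sub_one_sub_smul_sq_sub_one hAB hM⟩
end

section
/- Let g ∈ ℂ and let P be a 3×3 complex matrix with P³ = g·P. Then the matrix exponential satisfies exp(P) = I₃ + A·P + B·P², where A = ∑_{k≥0} gᵏ/(2k+1)! and B = ∑_{k≥0} gᵏ/(2k+2)! (these series converge absolutely; when g ≠ 0 they equal sinh(√g)/√g and (cosh(√g) − 1)/g respectively). -/
/-!
Since `P³ = g • P`, the odd powers are `P^(2k+1) = gᵏ • P` and the positive even powers are
`P^(2k+2) = gᵏ • P²`. Splitting the exponential series into its constant term, its odd terms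
and its positive even terms therefore collapses it onto `1`, `P` and `P²`, with the scalar
series `∑ gᵏ/(2k+1)!` and `∑ gᵏ/(2k+2)!` as coefficients; these converge by comparison with
`∑ ‖g‖ᵏ/k!`.
-/

open NormedSpace Nat

section Powers

variable {R A : Type*} [Monoid R] [Monoid A] [MulAction R A] [IsScalarTower R A A]
  {g : R} {x : A}

theorem pow_two_mul_add_one_of_pow_three_eq_smul (hx : x ^ 3 = g • x) (k : ℕ) :
    x ^ (2 * k + 1) = g ^ k • x := by
  induction k with
  | zero => simp
  | succ k ih =>
    calc x ^ (2 * (k + 1) + 1) = x ^ (2 * k + 1) * x ^ 2 := by rw [← pow_add]; ring_nf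
      _ = g ^ k • x ^ 3 := by rw [ih, smul_mul_assoc, ← pow_succ' x 2]
      _ = g ^ (k + 1) • x := by rw [hx, smul_smul, pow_succ]

theorem pow_two_mul_add_two_of_pow_three_eq_smul (hx : x ^ 3 = g • x) (k : ℕ) :
    x ^ (2 * k + 2) = g ^ k • x ^ 2 := by
  rw [pow_succ, pow_two_mul_add_one_of_pow_three_eq_smul hx, smul_mul_assoc, ← pow_two]

end Powers

theorem summable_pow_div_factorial_two_mul_add {𝕂 : Type*} [RCLike 𝕂] (g : 𝕂) (c : ℕ) :
    Summable fun k : ℕ => g ^ k / ((2 * k + c)! : 𝕂) := by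
  refine (Real.summable_pow_div_factorial ‖g‖).of_norm_bounded fun k => ?_
  rw [norm_div, norm_pow, RCLike.norm_natCast]
  gcongr
  omega

theorem exp_eq_of_pow_three_eq_smul {𝕂 𝔸 : Type*} [RCLike 𝕂] [NormedRing 𝔸] [NormedAlgebra 𝕂 𝔸]
    [CompleteSpace 𝔸] {g : 𝕂} {x : 𝔸} (hx : x ^ 3 = g • x) :
    exp x = 1 + (∑' k : ℕ, g ^ k / ((2 * k + 1)! : 𝕂)) • x +
      (∑' k : ℕ, g ^ k / ((2 * k + 2)! : 𝕂)) • x ^ 2 := by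
  have hcoeff (k n : ℕ) (y : 𝔸) (hy : x ^ n = g ^ k • y) :
      ((n ! : 𝕂)⁻¹ • x ^ n) = (g ^ k / (n ! : 𝕂)) • y := by
    rw [hy, smul_smul, div_eq_mul_inv, mul_comm]
  have hodd : HasSum (fun k => ((2 * k + 1)! : 𝕂)⁻¹ • x ^ (2 * k + 1))
      ((∑' k : ℕ, g ^ k / ((2 * k + 1)! : 𝕂)) • x) := by
    simp only [hcoeff _ _ _ (pow_two_mul_add_one_of_pow_three_eq_smul hx _)]
    exact (summable_pow_div_factorial_two_mul_add g 1).hasSum.smul_const x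
  have heven : HasSum (fun k => ((2 * k + 2)! : 𝕂)⁻¹ • x ^ (2 * k + 2))
      ((∑' k : ℕ, g ^ k / ((2 * k + 2)! : 𝕂)) • x ^ 2) := by
    simp only [hcoeff _ _ _ (pow_two_mul_add_two_of_pow_three_eq_smul hx _)]
    exact (summable_pow_div_factorial_two_mul_add g 2).hasSum.smul_const (x ^ 2)
  have hsplit :=
    HasSum.even_add_odd (f := fun n => (n ! : 𝕂)⁻¹ • x ^ n) (HasSum.zero_add heven) hodd
  rw [(exp_series_hasSum_exp' (𝕂 := 𝕂) x).unique hsplit]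
  simp only [mul_zero, factorial_zero, cast_one, inv_one, pow_zero, one_smul]
  abel

/-- Baker's formula: if `P³ = g·P` for a complex 3×3 matrix `P`, then
`exp(P) = I₃ + A·P + B·P²` where `A = ∑_{k≥0} gᵏ/(2k+1)!` and `B = ∑_{k≥0} gᵏ/(2k+2)!`
(both series converge absolutely). -/
theorem stmt_16 (g : ℂ) (P : Matrix (Fin 3) (Fin 3) ℂ) (hP : P ^ 3 = g • P) :
    Summable (fun k : ℕ => g ^ k / ((2 * k + 1).factorial : ℂ)) ∧
    Summable (fun k : ℕ => g ^ k / ((2 * k + 2).factorial : ℂ)) ∧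
    NormedSpace.exp P =
      1 + (∑' k : ℕ, g ^ k / ((2 * k + 1).factorial : ℂ)) • P +
        (∑' k : ℕ, g ^ k / ((2 * k + 2).factorial : ℂ)) • P ^ 2 := by
  let : NormedRing (Matrix (Fin 3) (Fin 3) ℂ) := Matrix.linftyOpNormedRing
  let : NormedAlgebra ℂ (Matrix (Fin 3) (Fin 3) ℂ) := Matrix.linftyOpNormedAlgebra
  exact ⟨summable_pow_div_factorial_two_mul_add g 1, summable_pow_div_factorial_two_mul_add g 2,
    exp_eq_of_pow_three_eq_smul hP⟩
end

section
/- Let S = ℝ[a,b] be the polynomial ring in two commuting variables over ℝ, and let U = !![0, a; 0, 0] and V = !![0, 0; b, 0] be matrices in M₂(S). Then there is no matrix W in the unital ℝ-subalgebra of M₂(S) generated by U and V such that for all real numbers α, β, exp(W(α,β)) = ((1 + U)(1 + V))(α,β), where Z(α,β) denotes the real 2×2 matrix obtained from Z ∈ M₂(S) by evaluating every entry at a = α, b = β, and exp denotes the matrix exponential. (Note that U² = V² = 0, so (1 + U)(1 + V) = exp(U)·exp(V) as polynomial matrices; thus the solution W of exp(W) = exp(U)exp(V) exists only in the completion of the algebra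 generated by U and V, not in the algebra itself.) -/
/-!
If `exp W(α,β) = T(α,β) = !![1 + αβ, α; β, 1]`, then `det T = 1` forces `tr W(α,β) = 0`. A traceless
real `2 × 2` matrix satisfies `M² = d • 1` with `d = -det M`, hence `exp M = C(d) • 1 + S(d) • M`
where `C(d) = ∑ dⁿ/(2n)!`, and comparing traces on the diagonal `α = β = x` gives
`C(P(x)) = 1 + x²/2` for the polynomial `P(x) = -det W(x,x)`. Since `C ≤ 1` on `d ≤ 0`, `P` is
positive away from `0`, and then `C(d) ≥ d³/6!` bounds `P(x)³` by a quadratic in `x`, so `P` is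
constant, which is absurd.
-/

open Matrix MvPolynomial

noncomputable section

/-- `U = !![0, a; 0, 0]` over `S = ℝ[a,b]`, realized as `MvPolynomial (Fin 2) ℝ`
with `a = X 0`, `b = X 1`. -/
def U : Matrix (Fin 2) (Fin 2) (MvPolynomial (Fin 2) ℝ) := !![0, X 0; 0, 0]

/-- `V = !![0, 0; b, 0]` over `S = ℝ[a,b]`. -/
def V : Matrix (Fin 2) (Fin 2) (MvPolynomial (Fin 2) ℝ) := !![0, 0; X 1, 0]

/-- Evaluation of a polynomial matrix `Z ∈ M₂(ℝ[a,b])` at `a = α`, `b = β`. -/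
def eval₂Mat (α β : ℝ) (Z : Matrix (Fin 2) (Fin 2) (MvPolynomial (Fin 2) ℝ)) :
    Matrix (Fin 2) (Fin 2) ℝ := Z.map (aeval ![α, β])

open Filter
open scoped Nat

/- The power series of `cosh √d` and `sinh √d / √d`, which make sense for every real `d`
(for `d < 0` they are `cos √(-d)` and `sin √(-d) / √(-d)`). -/
def coshSqrt (d : ℝ) : ℝ := ∑' n : ℕ, d ^ n / (2 * n)!

def sinhcSqrt (d : ℝ) : ℝ := ∑' n : ℕ, d ^ n / (2 * n + 1)!

lemma summable_pow_div_factorial_of_le (d : ℝ) {g : ℕ → ℕ} (hg : ∀ n, n ≤ g n) :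
    Summable fun n : ℕ => d ^ n / (g n)! := by
  refine .of_norm <| .of_nonneg_of_le (fun _ => norm_nonneg _) (fun n => ?_)
    (Real.summable_pow_div_factorial |d|)
  rw [norm_div, norm_pow, Real.norm_eq_abs, Real.norm_natCast]
  gcongr
  exact hg n

lemma hasSum_coshSqrt (d : ℝ) : HasSum (fun n : ℕ => d ^ n / (2 * n)!) (coshSqrt d) :=
  (summable_pow_div_factorial_of_le d fun n => by omega).hasSum

lemma hasSum_sinhcSqrt (d : ℝ) : HasSum (fun n : ℕ => d ^ n / (2 * n + 1)!) (sinhcSqrt d) :=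
  (summable_pow_div_factorial_of_le d fun n => by omega).hasSum

theorem exp_eq_coshSqrt_smul_one_add_sinhcSqrt_smul {A : Type*} [Ring A] [Algebra ℝ A]
    [TopologicalSpace A] [IsTopologicalRing A] [ContinuousSMul ℝ A] [T2Space A]
    {M : A} {d : ℝ} (h : M ^ 2 = d • 1) :
    NormedSpace.exp M = coshSqrt d • 1 + sinhcSqrt d • M := by
  have heven (k : ℕ) : ((2 * k)! : ℝ)⁻¹ • M ^ (2 * k) = (d ^ k / (2 * k)!) • 1 := by
    rw [pow_mul, h, smul_pow, one_pow, smul_smul, div_eq_inv_mul]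
  have hodd (k : ℕ) : ((2 * k + 1)! : ℝ)⁻¹ • M ^ (2 * k + 1) = (d ^ k / (2 * k + 1)!) • M := by
    rw [pow_succ, pow_mul, h, smul_pow, one_pow, smul_one_mul, smul_smul, div_eq_inv_mul]
  rw [NormedSpace.exp_eq_tsum ℝ]
  refine (HasSum.even_add_odd ?_ ?_).tsum_eq
  · simpa only [heven] using (hasSum_coshSqrt d).smul_const (1 : A)
  · simpa only [hodd] using (hasSum_sinhcSqrt d).smul_const M

theorem Matrix.sq_eq_neg_det_smul_one_of_trace_eq_zero {R : Type*} [CommRing R] [Nontrivial R]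
    {M : Matrix (Fin 2) (Fin 2) R} (h : M.trace = 0) : M ^ 2 = (-M.det) • 1 := by
  have := M.aeval_self_charpoly
  rw [charpoly_fin_two, h] at this
  simpa [neg_smul, ← Algebra.algebraMap_eq_smul_one, eq_neg_iff_add_eq_zero] using this

theorem coshSqrt_sq_sub_mul_sinhcSqrt_sq (d : ℝ) : coshSqrt d ^ 2 - d * sinhcSqrt d ^ 2 = 1 := by
  set M : Matrix (Fin 2) (Fin 2) ℝ := !![0, 1; d, 0]
  have hM : M ^ 2 = d • 1 := by
    ext i j
    fin_cases i <;> fin_cases j <;> simp [M, sq]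
  have hM' : (-M) ^ 2 = d • 1 := by rw [neg_sq, hM]
  have h := Matrix.exp_add_of_commute M (-M) (Commute.refl M).neg_right
  rw [add_neg_cancel, NormedSpace.exp_zero, exp_eq_coshSqrt_smul_one_add_sinhcSqrt_smul hM,
    exp_eq_coshSqrt_smul_one_add_sinhcSqrt_smul hM'] at h
  have h00 := congrFun₂ h 0 0
  simp [M, mul_apply, Fin.sum_univ_two] at h00
  linear_combination -h00

theorem Matrix.trace_exp_of_trace_eq_zero {M : Matrix (Fin 2) (Fin 2) ℝ} (h : M.trace = 0) :
    (NormedSpace.exp M).trace = 2 * coshSqrt (-M.det) := by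
  rw [exp_eq_coshSqrt_smul_one_add_sinhcSqrt_smul (sq_eq_neg_det_smul_one_of_trace_eq_zero h)]
  simp only [trace_add, trace_smul, trace_one, Fintype.card_fin, Nat.cast_ofNat, smul_eq_mul, h,
    mul_zero, add_zero]
  ring

theorem Matrix.det_exp_of_trace_eq_zero {M : Matrix (Fin 2) (Fin 2) ℝ} (h : M.trace = 0) :
    (NormedSpace.exp M).det = 1 := by
  rw [exp_eq_coshSqrt_smul_one_add_sinhcSqrt_smul (sq_eq_neg_det_smul_one_of_trace_eq_zero h),
    ← coshSqrt_sq_sub_mul_sinhcSqrt_sq (-M.det)]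
  generalize hd : -M.det = d
  rw [trace_fin_two] at h
  rw [det_fin_two] at hd
  simp only [det_fin_two, add_apply, smul_apply, one_apply_eq, one_apply_ne zero_ne_one,
    one_apply_ne one_ne_zero, smul_eq_mul, mul_one, mul_zero, zero_add]
  linear_combination (coshSqrt d * sinhcSqrt d) * h - sinhcSqrt d ^ 2 * hd

theorem Matrix.det_exp_fin_two (M : Matrix (Fin 2) (Fin 2) ℝ) :
    (NormedSpace.exp M).det = Real.exp M.trace := by
  set c := M.trace / 2
  have hM₀ : (M - c • 1).trace = 0 := by simp [c, trace_sub]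
  have hexp : NormedSpace.exp (c • 1 : Matrix (Fin 2) (Fin 2) ℝ) = Real.exp c • 1 := by
    rw [smul_one_eq_diagonal, exp_diagonal, smul_one_eq_diagonal, Pi.exp_def, Real.exp_eq_exp_ℝ]
  calc (NormedSpace.exp M).det
      = (NormedSpace.exp (c • 1) * NormedSpace.exp (M - c • 1)).det := by
        rw [← Matrix.exp_add_of_commute _ _ ((Commute.one_left _).smul_left c), add_sub_cancel]
    _ = Real.exp M.trace := by
        rw [det_mul, det_exp_of_trace_eq_zero hM₀, hexp, det_smul, det_one, Fintype.card_fin,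
          mul_one, ← Real.exp_nat_mul]
        simp [c, mul_div_cancel₀]

theorem coshSqrt_le_one_of_nonpos {d : ℝ} (hd : d ≤ 0) : coshSqrt d ≤ 1 := by
  have h : coshSqrt d = Real.cos (Real.sqrt (-d)) := by
    rw [Real.cos_eq_tsum, coshSqrt]
    congr 1 with n
    rw [pow_mul, Real.sq_sqrt (neg_nonneg.mpr hd), ← mul_pow, neg_one_mul, neg_neg]
  exact h ▸ Real.cos_le_one _

theorem pow_three_div_le_coshSqrt {d : ℝ} (hd : 0 ≤ d) : d ^ 3 / 720 ≤ coshSqrt d :=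
  (hasSum_coshSqrt d).summable.le_tsum 3 fun _ _ => by positivity

theorem Polynomial.degree_le_of_eventually_le {𝕜 : Type*} [NormedField 𝕜] [LinearOrder 𝕜]
    [IsStrictOrderedRing 𝕜] [OrderTopology 𝕜] {P Q : Polynomial 𝕜}
    (h : ∀ᶠ x in atTop, 0 ≤ P.eval x ∧ P.eval x ≤ Q.eval x) : P.degree ≤ Q.degree := by
  rcases eq_or_ne P 0 with rfl | hP
  · simp
  by_contra! hlt
  have hge : ∀ᶠ x in atTop, 1 ≤ Q.eval x / P.eval x := by
    filter_upwards [h, eventually_atTop_not_isRoot P hP] with x ⟨h0, hle⟩ hroot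
    rwa [one_le_div (lt_of_le_of_ne h0 (Ne.symm hroot))]
  have hlt1 := (div_tendsto_atTop_zero_of_degree_lt Q P hlt).eventually (gt_mem_nhds one_pos)
  obtain ⟨x, h1, h2⟩ := (hge.and hlt1).exists
  exact (h1.trans_lt h2).false

theorem not_exists_polynomial_coshSqrt_eval_eq :
    ¬ ∃ P : Polynomial ℝ, ∀ x : ℝ, coshSqrt (P.eval x) = 1 + x ^ 2 / 2 := by
  rintro ⟨P, hP⟩
  have hpos (x : ℝ) (hx : x ≠ 0) : 0 < P.eval x := by
    by_contra! hle
    have hx2 : 0 < x ^ 2 := by positivity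
    linarith [hP x, coshSqrt_le_one_of_nonpos hle]
  have hdeg : (P ^ 3).degree ≤
      (Polynomial.C (720 : ℝ) + Polynomial.C 360 * Polynomial.X ^ 2).degree := by
    refine Polynomial.degree_le_of_eventually_le ?_
    filter_upwards [eventually_gt_atTop 0] with x hx
    have := pow_three_div_le_coshSqrt (hpos x hx.ne').le
    simp only [Polynomial.eval_pow, Polynomial.eval_add, Polynomial.eval_mul, Polynomial.eval_C,
      Polynomial.eval_X]
    exact ⟨pow_nonneg (hpos x hx.ne').le 3, by linarith [hP x]⟩
  have hconst : P.natDegree = 0 := by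
    have hle := Polynomial.natDegree_le_natDegree hdeg
    have hquad : (Polynomial.C (720 : ℝ) + Polynomial.C 360 * Polynomial.X ^ 2).natDegree ≤ 2 := by
      compute_degree
    rw [Polynomial.natDegree_pow] at hle
    omega
  have h1 := hP 1
  have h2 := hP 2
  rw [Polynomial.eq_C_of_natDegree_eq_zero hconst, Polynomial.eval_C] at h1 h2
  linarith

theorem MvPolynomial.aeval_const_eq_eval {σ R : Type*} [CommSemiring R] (x : R)
    (p : MvPolynomial σ R) :
    aeval (fun _ => x) p = (aeval (fun _ => Polynomial.X) p).eval x := by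
  rw [← Polynomial.coe_aeval_eq_eval, comp_aeval_apply]
  simp

theorem eval₂Mat_one_add_U_mul_one_add_V (α β : ℝ) :
    eval₂Mat α β ((1 + U) * (1 + V)) = !![1 + α * β, α; β, 1] := by
  ext i j
  fin_cases i <;> fin_cases j <;> simp [eval₂Mat, U, V, mul_apply, Fin.sum_univ_two, one_apply]

/-- There is no `W` in the unital `ℝ`-subalgebra of `M₂(ℝ[a,b])` generated by `U` and `V`
such that, for all real `α, β`, `exp(W(α,β)) = ((1 + U)(1 + V))(α,β)`: the solution `W` of
`exp(W) = exp(U)exp(V) = (1 + U)(1 + V)` exists only in the completion of the algebra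
generated by `U` and `V`, not in the algebra itself. -/
theorem stmt_18 :
    ¬ ∃ W ∈ Algebra.adjoin ℝ {U, V},
      ∀ α β : ℝ,
        NormedSpace.exp (eval₂Mat α β W) = eval₂Mat α β ((1 + U) * (1 + V)) := by
  rintro ⟨W, -, hW⟩
  have htrace (α β : ℝ) : (eval₂Mat α β W).trace = 0 := by
    have hdet := congrArg det (hW α β)
    rwa [det_exp_fin_two, eval₂Mat_one_add_U_mul_one_add_V, det_fin_two_of,
      show (1 + α * β) * 1 - α * β = (1 : ℝ) by ring, Real.exp_eq_one_iff] at hdet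
  refine not_exists_polynomial_coshSqrt_eval_eq
    ⟨-(aeval (fun _ => Polynomial.X) W.det), fun x => ?_⟩
  have hdet : (eval₂Mat x x W).det = aeval (fun _ => x) W.det := by
    rw [eval₂Mat, vec_single_eq_const, vecCons_const]
    exact ((aeval fun _ => x).map_det W).symm
  have htr := congrArg trace (hW x x)
  rw [trace_exp_of_trace_eq_zero (htrace x x), eval₂Mat_one_add_U_mul_one_add_V,
    trace_fin_two_of, hdet] at htr
  rw [Polynomial.eval_neg, ← aeval_const_eq_eval]
  linarith
end
end
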